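/- Let $H\in(0,1/2)$, $T>0$, and $1-2H<\beta<\alpha'<1$. Then there is a constant $C=C(H,\beta,\alpha',T)$ such that for all $\Delta\le 0$ and all $0\le t\le T$: $\int_0^t\int_0^s \frac{|h'(r-\Delta)-h'(r)|}{(s-r)^{1-\alpha'}}\,dr\,ds \le C\,|\Delta|^{2H+\gamma-1}$ for every $\gamma$ with $1-2H<\gamma<1$ and with $C$ also depending on $\gamma$, where $h'(r)=2H\,\mathrm{sign}(r)|r|^{2H-1}$. -/

import Mathlib

open Real MeasureTheory Set

/-!
For `r > 0` and `Δ ≤ 0` the mean value theorem bounds `|h'(r - Δ) - h'(r)|` by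
`2H r ^ (2H - 2) |Δ|`, while trivially it is at most `2H r ^ (2H - 1)`; interpolating between
the two gives `2H r ^ (-γ) |Δ| ^ (2H + γ - 1)`. What remains is the Beta integral
`∫₀ˢ r ^ (-γ) (s - r) ^ (α' - 1) dr ≍ s ^ (α' - γ)`, whose integral over `s ∈ [0, t]` is
bounded in terms of `T`.
-/

lemma rpow_sub_rpow_le_mul_sub {p a b : ℝ} (hp : p ≤ 0) (ha : 0 < a) (hab : a ≤ b) :
    a ^ p - b ^ p ≤ -p * a ^ (p - 1) * (b - a) := by
  rcases hab.eq_or_lt with rfl | hab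
  · simp
  obtain ⟨c, hc, hslope⟩ := exists_hasDerivAt_eq_slope (fun x => x ^ p)
    (fun x => p * x ^ (p - 1)) hab
    (fun x hx => (continuousAt_rpow_const x p (.inl (ha.trans_le hx.1).ne')).continuousWithinAt)
    (fun x hx => hasDerivAt_rpow_const (.inl (ha.trans hx.1).ne'))
  have hmvt : a ^ p - b ^ p = -p * c ^ (p - 1) * (b - a) := by
    rw [eq_div_iff (sub_pos.2 hab).ne'] at hslope
    linarith
  rw [hmvt]
  have : c ^ (p - 1) ≤ a ^ (p - 1) := rpow_le_rpow_of_nonpos ha hc.1.le (by linarith)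
  gcongr
  linarith

lemma min_one_le_rpow {x θ : ℝ} (hx : 0 ≤ x) (hθ0 : 0 ≤ θ) (hθ1 : θ ≤ 1) :
    min 1 x ≤ x ^ θ := by
  rcases le_total x 1 with h | h
  · exact (min_le_right _ _).trans (self_le_rpow_of_le_one hx h hθ1)
  · exact (min_le_left _ _).trans (one_le_rpow h hθ0)

lemma rpow_sub_rpow_add_le {p θ r d : ℝ} (hp1 : -1 ≤ p) (hp0 : p ≤ 0) (hθ0 : 0 ≤ θ)
    (hθ1 : θ ≤ 1) (hr : 0 < r) (hd : 0 ≤ d) :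
    r ^ p - (r + d) ^ p ≤ r ^ (p - θ) * d ^ θ := by
  have htrivial : r ^ p - (r + d) ^ p ≤ r ^ p * 1 := by
    linarith [rpow_nonneg (hr.le.trans (le_add_of_nonneg_right hd)) p]
  have hmvt : r ^ p - (r + d) ^ p ≤ r ^ p * (d / r) := by
    have h := rpow_sub_rpow_le_mul_sub hp0 hr (le_add_of_nonneg_right hd)
    have hpow : r ^ p * (d / r) = r ^ (p - 1) * d := by
      rw [rpow_sub_one hr.ne']; ring
    rw [add_sub_cancel_left] at h
    rw [hpow]
    nlinarith [mul_nonneg (rpow_nonneg hr.le (p - 1)) hd]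
  calc r ^ p - (r + d) ^ p ≤ r ^ p * min 1 (d / r) := by
        rw [mul_min_of_nonneg _ _ (rpow_nonneg hr.le p)]
        exact le_min htrivial hmvt
    _ ≤ r ^ p * (d / r) ^ θ := by
        gcongr
        exact min_one_le_rpow (div_nonneg hd hr.le) hθ0 hθ1
    _ = r ^ (p - θ) * d ^ θ := by
        rw [div_rpow hd hr.le, rpow_sub hr]; ring

/-- The derivative `h'` of `h r = |r| ^ (2 * H)`. -/
noncomputable def absRpowDeriv (H r : ℝ) : ℝ := 2 * H * Real.sign r * |r| ^ (2 * H - 1)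

lemma abs_absRpowDeriv_sub_le {H γ Δ r : ℝ} (hH0 : 0 ≤ H) (hH : H ≤ 1 / 2)
    (hγ1 : 1 - 2 * H ≤ γ) (hγ2 : γ ≤ 2 - 2 * H) (hΔ : Δ ≤ 0) (hr : 0 < r) :
    |absRpowDeriv H (r - Δ) - absRpowDeriv H r| ≤ 2 * H * r ^ (-γ) * |Δ| ^ (2 * H + γ - 1) := by
  have hrΔ : r - Δ = r + |Δ| := by rw [abs_of_nonpos hΔ]; ring
  have hpos : 0 < r + |Δ| := by positivity
  have hdiff := rpow_sub_rpow_add_le (p := 2 * H - 1) (θ := 2 * H + γ - 1) (by linarith)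
    (by linarith) (by linarith) (by linarith) hr (abs_nonneg Δ)
  have hanti : (r + |Δ|) ^ (2 * H - 1) ≤ r ^ (2 * H - 1) :=
    rpow_le_rpow_of_nonpos hr (le_add_of_nonneg_right (abs_nonneg Δ)) (by linarith)
  rw [show 2 * H - 1 - (2 * H + γ - 1) = -γ by ring] at hdiff
  simp only [absRpowDeriv, hrΔ, sign_of_pos hr, sign_of_pos hpos, abs_of_pos hr,
    abs_of_pos hpos, mul_one]
  rw [abs_of_nonpos (by nlinarith), mul_assoc (2 * H)]
  nlinarith

lemma rpow_mul_rpow_le_of_nonpos {u v x y : ℝ} (hu : u ≤ 0) (hv : v ≤ 0) (hx : 0 < x)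
    (hy : 0 < y) :
    x ^ u * y ^ v ≤ ((x + y) / 2) ^ v * x ^ u + ((x + y) / 2) ^ u * y ^ v := by
  have hxu := rpow_pos_of_pos hx u
  have hyv := rpow_pos_of_pos hy v
  have hm : 0 < (x + y) / 2 := by positivity
  rcases le_total x y with h | h
  · have : y ^ v ≤ ((x + y) / 2) ^ v := rpow_le_rpow_of_nonpos hm (by linarith) hv
    nlinarith [rpow_pos_of_pos hm u]
  · have : x ^ u ≤ ((x + y) / 2) ^ u := rpow_le_rpow_of_nonpos hm (by linarith) hu
    nlinarith [rpow_pos_of_pos hm v]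

lemma integral_mono_of_nonneg_on_Ioo {f g : ℝ → ℝ} {a b : ℝ} (hab : a ≤ b)
    (hg : IntervalIntegrable g volume a b) (hf : ∀ x ∈ Ioo a b, 0 ≤ f x)
    (hfg : ∀ x ∈ Ioo a b, f x ≤ g x) :
    ∫ x in a..b, f x ≤ ∫ x in a..b, g x := by
  simp only [intervalIntegral.integral_of_le hab, integral_Ioc_eq_integral_Ioo]
  exact integral_mono_of_nonneg (ae_restrict_of_forall_mem measurableSet_Ioo hf)
    (hg.1.mono_set Ioo_subset_Ioc_self) (ae_restrict_of_forall_mem measurableSet_Ioo hfg)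

lemma intervalIntegrable_sub_rpow {a s : ℝ} (ha : -1 < a) :
    IntervalIntegrable (fun r => (s - r) ^ a) volume 0 s := by
  simpa using
    ((intervalIntegral.intervalIntegrable_rpow' ha (a := 0) (b := s)).comp_sub_left s).symm

lemma integral_sub_rpow {a s : ℝ} (ha : -1 < a) :
    ∫ r in (0 : ℝ)..s, (s - r) ^ a = s ^ (a + 1) / (a + 1) := by
  rw [intervalIntegral.integral_comp_sub_left (fun x => x ^ a) s, sub_self, sub_zero,
    integral_rpow (.inl ha), zero_rpow (by linarith), sub_zero]

/-- Bounds `B(1 - γ, α) = s ^ (γ - α) ∫₀ˢ r ^ (-γ) (s - r) ^ (α - 1) dr`, by splitting at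
`s / 2`. -/
noncomputable def betaBound (α γ : ℝ) : ℝ := 2 ^ (1 - α) / (1 - γ) + 2 ^ γ / α

lemma betaBound_pos {α γ : ℝ} (hα : 0 < α) (hγ : γ < 1) : 0 < betaBound α γ :=
  add_pos (div_pos (by positivity) (by linarith)) (div_pos (by positivity) hα)

lemma intervalIntegrable_betaMajorant {α γ s : ℝ} (hα : 0 < α) (hγ : γ < 1) :
    IntervalIntegrable (fun r => (s / 2) ^ (α - 1) * r ^ (-γ) + (s / 2) ^ (-γ) * (s - r) ^ (α - 1))
      volume 0 s :=
  ((intervalIntegral.intervalIntegrable_rpow' (by linarith)).const_mul _).add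
    ((intervalIntegrable_sub_rpow (by linarith)).const_mul _)

lemma integral_betaMajorant {α γ s : ℝ} (hα : 0 < α) (hγ : γ < 1) (hs : 0 < s) :
    ∫ r in (0 : ℝ)..s, ((s / 2) ^ (α - 1) * r ^ (-γ) + (s / 2) ^ (-γ) * (s - r) ^ (α - 1)) =
      betaBound α γ * s ^ (α - γ) := by
  rw [intervalIntegral.integral_add
      ((intervalIntegral.intervalIntegrable_rpow' (by linarith)).const_mul _)
      ((intervalIntegrable_sub_rpow (by linarith)).const_mul _),
    intervalIntegral.integral_const_mul, intervalIntegral.integral_const_mul,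
    integral_rpow (.inl (by linarith)), zero_rpow (by linarith), sub_zero,
    integral_sub_rpow (by linarith), div_rpow hs.le zero_le_two,
    div_rpow hs.le zero_le_two, sub_add_cancel, neg_add_eq_sub, betaBound, add_mul]
  have hexp₁ : s ^ (α - γ) = s ^ (α - 1) * s ^ (1 - γ) := by rw [← rpow_add hs]; ring_nf
  have hexp₂ : s ^ (α - γ) = s ^ (-γ) * s ^ α := by rw [← rpow_add hs]; ring_nf
  have htwo₁ : (2 : ℝ) ^ (1 - α) = (2 ^ (α - 1))⁻¹ := by rw [← rpow_neg zero_le_two]; ring_nf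
  have htwo₂ : (2 : ℝ) ^ γ = (2 ^ (-γ))⁻¹ := by rw [← rpow_neg zero_le_two, neg_neg]
  congr 1
  · rw [hexp₁, htwo₁]; ring
  · rw [hexp₂, htwo₂]; ring

lemma integral_abs_absRpowDeriv_sub_div_le {H γ α Δ s : ℝ} (hH0 : 0 ≤ H) (hH : H ≤ 1 / 2)
    (hγ1 : 1 - 2 * H ≤ γ) (hγ2 : γ < 1) (hα0 : 0 < α) (hα1 : α ≤ 1) (hΔ : Δ ≤ 0) (hs : 0 < s) :
    ∫ r in (0 : ℝ)..s, |absRpowDeriv H (r - Δ) - absRpowDeriv H r| / (s - r) ^ (1 - α) ≤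
      2 * H * |Δ| ^ (2 * H + γ - 1) * betaBound α γ * s ^ (α - γ) := by
  set c := 2 * H * |Δ| ^ (2 * H + γ - 1)
  have hc : 0 ≤ c := by positivity
  calc _ ≤ ∫ r in (0 : ℝ)..s,
          c * ((s / 2) ^ (α - 1) * r ^ (-γ) + (s / 2) ^ (-γ) * (s - r) ^ (α - 1)) := by
        refine integral_mono_of_nonneg_on_Ioo hs.le
          ((intervalIntegrable_betaMajorant hα0 hγ2).const_mul c)
          (fun r hr => div_nonneg (abs_nonneg _) (rpow_nonneg (sub_pos.2 hr.2).le _))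
          (fun r ⟨hr0, hrs⟩ => ?_)
        have hsr : 0 < s - r := sub_pos.2 hrs
        have hkernel := rpow_mul_rpow_le_of_nonpos (u := -γ) (v := α - 1) (by linarith)
          (by linarith) hr0 hsr
        rw [add_sub_cancel] at hkernel
        calc _ = |absRpowDeriv H (r - Δ) - absRpowDeriv H r| * (s - r) ^ (α - 1) := by
              rw [div_eq_mul_inv, ← rpow_neg hsr.le, neg_sub]
          _ ≤ 2 * H * r ^ (-γ) * |Δ| ^ (2 * H + γ - 1) * (s - r) ^ (α - 1) := by
              gcongr
              exact abs_absRpowDeriv_sub_le hH0 hH hγ1 (by linarith) hΔ hr0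
          _ = c * (r ^ (-γ) * (s - r) ^ (α - 1)) := by ring
          _ ≤ _ := by gcongr
    _ = c * betaBound α γ * s ^ (α - γ) := by
        rw [intervalIntegral.integral_const_mul, integral_betaMajorant hα0 hγ2 hs, ← mul_assoc]

theorem stmt15 (H T β α' γ : ℝ) (hH0 : 0 < H) (hH : H < 1/2) (hT : 0 < T)
    (hβ1 : 1 - 2 * H < β) (hβα : β < α') (hα' : α' < 1)
    (hγ1 : 1 - 2 * H < γ) (hγ2 : γ < 1) :
    ∃ C > 0, ∀ (Δ t : ℝ), Δ ≤ 0 → 0 ≤ t → t ≤ T →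
      (∫ s in (0:ℝ)..t, ∫ r in (0:ℝ)..s,
          |2 * H * Real.sign (r - Δ) * |r - Δ| ^ (2 * H - 1)
            - 2 * H * Real.sign r * |r| ^ (2 * H - 1)|
            / (s - r) ^ (1 - α'))
        ≤ C * |Δ| ^ (2 * H + γ - 1) := by
  have hα'0 : 0 < α' := by linarith
  have hexp : -1 < α' - γ := by linarith
  have hB := betaBound_pos hα'0 hγ2
  refine ⟨2 * H * betaBound α' γ * T ^ (α' - γ + 1) / (α' - γ + 1),
    div_pos (by positivity) (by linarith), fun Δ t hΔ ht0 htT => ?_⟩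
  set c := 2 * H * |Δ| ^ (2 * H + γ - 1) * betaBound α' γ
  calc _ ≤ ∫ s in (0 : ℝ)..t, c * s ^ (α' - γ) :=
        integral_mono_of_nonneg_on_Ioo ht0
          ((intervalIntegral.intervalIntegrable_rpow' hexp).const_mul c)
          (fun s hs => intervalIntegral.integral_nonneg hs.1.le
            fun r hr => div_nonneg (abs_nonneg _) (rpow_nonneg (sub_nonneg.2 hr.2) _))
          (fun s hs => integral_abs_absRpowDeriv_sub_div_le hH0.le hH.le hγ1.le hγ2 hα'0
            hα'.le hΔ hs.1)
    _ = c * (t ^ (α' - γ + 1) / (α' - γ + 1)) := by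
        rw [intervalIntegral.integral_const_mul, integral_rpow (.inl hexp),
          zero_rpow (by linarith), sub_zero]
    _ ≤ c * (T ^ (α' - γ + 1) / (α' - γ + 1)) := by
        gcongr <;> linarith
    _ = _ := by ring
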